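/- Let Ω be a unital left Q-module algebra and let A ⊆ Ω be a unital subalgebra that is stable under the Q-action (q·a ∈ A for all q ∈ Q, a ∈ A), so that A is itself a Q-module algebra and the Connes–Moscovici algebra H = A ⊗ Q ⊗ A is defined. Then the formula ρ(a ⊗ q ⊗ b)(ω) = a (q·ω) b (for a, b ∈ A, q ∈ Q, ω ∈ Ω, products taken in Ω) defines a homomorphism of unital ℂ-algebras ρ : H → End_ℂ(Ω); equivalently, (a ⊗ q ⊗ b)·ω := a(q·ω)b makes Ω a left H-module extending the Q-action and the left and right multiplications by A. -/
import Mathlib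


open TensorProduct

noncomputable section

/-- `(id ⊗ Δ) ∘ Δ : Q → Q ⊗ (Q ⊗ Q)`, producing the Sweedler legs
`q₍₁₎ ⊗ q₍₂₎ ⊗ q₍₃₎` of the iterated coproduct. -/
def comul2 (Q : Type*) [Ring Q] [HopfAlgebra ℂ Q] :
    Q →ₗ[ℂ] Q ⊗[ℂ] (Q ⊗[ℂ] Q) :=
  (LinearMap.lTensor Q (Coalgebra.comul (R := ℂ))).comp (Coalgebra.comul (R := ℂ))

/-- The right-hand side `Σ a (q₍₁₎·a') ⊗ q₍₂₎ q' ⊗ (q₍₃₎·b') b` of the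
Connes–Moscovici product formula on `H = A ⊗ Q ⊗ A`. -/
def cmMulRHS {Q A : Type*} [Ring Q] [HopfAlgebra ℂ Q] [Ring A] [Algebra ℂ A]
    (act : Q →ₗ[ℂ] A →ₗ[ℂ] A) (a : A) (q : Q) (b : A) (a' : A) (q' : Q) (b' : A) :
    A ⊗[ℂ] (Q ⊗[ℂ] A) :=
  TensorProduct.map ((LinearMap.mulLeft ℂ a).comp (act.flip a'))
    (TensorProduct.map (LinearMap.mulRight ℂ q')
      ((LinearMap.mulRight ℂ b).comp (act.flip b')))
    (comul2 Q q)

set_option maxHeartbeats 1000000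
set_option synthInstance.maxHeartbeats 200000

/-- If `Ω` is a unital left `Q`-module algebra and `A ⊆ Ω` is a unital subalgebra
stable under the `Q`-action, then `(a ⊗ q ⊗ b)·ω := a (q·ω) b` defines a unital
ℂ-algebra homomorphism `ρ : H → End_ℂ(Ω)` from the Connes–Moscovici algebra
`H = A ⊗ Q ⊗ A`; equivalently, it makes `Ω` a left `H`-module extending the
`Q`-action and the left and right multiplications by `A`. -/
theorem cm_representation_on_module_algebra
    {Q Ω : Type*} [Ring Q] [HopfAlgebra ℂ Q] [Ring Ω] [Algebra ℂ Ω]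
    (act : Q →ₗ[ℂ] Ω →ₗ[ℂ] Ω)
    -- `Ω` is a left `Q`-module:
    (hact_one : ∀ ω : Ω, act 1 ω = ω)
    (hact_mul : ∀ (q q' : Q) (ω : Ω), act (q * q') ω = act q (act q' ω))
    -- `Ω` is a `Q`-module algebra:
    (hact_alg_mul : ∀ (q : Q) (ω ω' : Ω),
      act q (ω * ω') =
        LinearMap.mul' ℂ Ω
          (TensorProduct.map (act.flip ω) (act.flip ω') (Coalgebra.comul (R := ℂ) q)))
    (hact_alg_one : ∀ q : Q, act q 1 = Coalgebra.counit (R := ℂ) q • (1 : Ω))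
    -- `A` is a unital subalgebra of `Ω` stable under the `Q`-action:
    (A : Subalgebra ℂ Ω)
    (hstable : ∀ (q : Q), ∀ a ∈ A, act q a ∈ A)
    -- `actA` is the induced `Q`-action on `A`:
    (actA : Q →ₗ[ℂ] A →ₗ[ℂ] A)
    (hactA : ∀ (q : Q) (a : A), (actA q a : Ω) = act q (a : Ω))
    -- the Connes–Moscovici multiplication on `H = A ⊗ Q ⊗ A`:
    (m : (A ⊗[ℂ] (Q ⊗[ℂ] A)) →ₗ[ℂ] (A ⊗[ℂ] (Q ⊗[ℂ] A)) →ₗ[ℂ] (A ⊗[ℂ] (Q ⊗[ℂ] A)))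
    (hm : ∀ (a : A) (q : Q) (b a' : A) (q' : Q) (b' : A),
      m (a ⊗ₜ[ℂ] (q ⊗ₜ[ℂ] b)) (a' ⊗ₜ[ℂ] (q' ⊗ₜ[ℂ] b')) = cmMulRHS actA a q b a' q' b') :
    ∃ ρ : (A ⊗[ℂ] (Q ⊗[ℂ] A)) →ₗ[ℂ] Module.End ℂ Ω,
      (∀ (a : A) (q : Q) (b : A) (ω : Ω),
        ρ (a ⊗ₜ[ℂ] (q ⊗ₜ[ℂ] b)) ω = (a : Ω) * act q ω * (b : Ω)) ∧
      (∀ x y : A ⊗[ℂ] (Q ⊗[ℂ] A), ρ (m x y) = ρ x * ρ y) ∧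
      ρ ((1 : A) ⊗ₜ[ℂ] ((1 : Q) ⊗ₜ[ℂ] (1 : A))) = 1 := by
  obtain ⟨ρ, hρ⟩ :
      ∃ ρ : (A ⊗[ℂ] (Q ⊗[ℂ] A)) →ₗ[ℂ] Module.End ℂ Ω,
        ∀ (a : A) (q : Q) (b : A) (ω : Ω),
          ρ (a ⊗ₜ[ℂ] (q ⊗ₜ[ℂ] b)) ω = (a : Ω) * act q ω * (b : Ω) := by
    refine ⟨TensorProduct.lift
      (((LinearMap.mul ℂ (Module.End ℂ Ω)).comp
          ((LinearMap.mul ℂ Ω).comp A.val.toLinearMap)).compl₂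
        (TensorProduct.lift
          ((((LinearMap.mul ℂ (Module.End ℂ Ω)).comp
              ((LinearMap.mul ℂ Ω).flip.comp A.val.toLinearMap)).flip).comp act))),
      fun a q b ω => ?_⟩
    simp [Module.End.mul_apply, LinearMap.mul_apply', mul_assoc]
  refine ⟨ρ, hρ, ?_, ?_⟩
  · have key : m.compr₂ ρ = (LinearMap.mul ℂ (Module.End ℂ Ω)).compl₁₂ ρ ρ := by
      ext a q b a' q' b' ω
      simp only [LinearMap.compr₂_apply, LinearMap.compl₁₂_apply, LinearMap.mul_apply',
        TensorProduct.AlgebraTensorModule.curry_apply, TensorProduct.curry_apply,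
        LinearMap.coe_restrictScalars, hm]
      rename_i ω
      rw [Module.End.mul_apply, hρ, hρ, mul_assoc ((a' : Ω)) (act q' ω) ((b' : Ω)),
        hact_alg_mul q (a' : Ω) (act q' ω * (b' : Ω))]
      show ρ (TensorProduct.map _ _
          (LinearMap.lTensor Q (Coalgebra.comul (R := ℂ)) (Coalgebra.comul (R := ℂ) q))) ω = _
      generalize Coalgebra.comul (R := ℂ) q = v
      induction v using TensorProduct.induction_on with
      | zero => simp
      | add v₁ v₂ h₁ h₂ =>
          simp only [map_add, LinearMap.add_apply, h₁, h₂, mul_add, add_mul]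
      | tmul q₁ q₂ =>
          simp only [LinearMap.lTensor_tmul, TensorProduct.map_tmul, LinearMap.mul'_apply,
            LinearMap.flip_apply]
          rw [hact_alg_mul q₂ (act q' ω) (b' : Ω)]
          generalize Coalgebra.comul (R := ℂ) q₂ = w
          induction w using TensorProduct.induction_on with
          | zero => simp
          | add w₁ w₂ h₁ h₂ =>
              simp only [map_add, TensorProduct.tmul_add, LinearMap.add_apply, h₁, h₂,
                mul_add, add_mul]
          | tmul q₂' q₃ =>
              simp only [TensorProduct.map_tmul, LinearMap.comp_apply, LinearMap.flip_apply,
                LinearMap.mulLeft_apply, LinearMap.mulRight_apply, LinearMap.mul'_apply, hρ,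
                MulMemClass.coe_mul, hactA, hact_mul, mul_assoc]
    intro x y
    exact LinearMap.congr_fun (LinearMap.congr_fun key x) y
  · apply LinearMap.ext; intro ω
    simp [hρ, hact_one]
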